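/- Let ε ≥ 0, α_0 > 0, α_1 > 0, and assume hypotheses (H). There exists a constant C > 0, depending only on P^max, N^max, α_0, α_1, V, ΔΨ_0^pzc, ΔΨ_1^pzc, λ, the interface coefficients (m_u^i, k_u^i, a_u^i, b_u^i)_{i=0,1; u=P,N} and T (and independent of the mesh and of Δt), such that for every mesh, every time step and every solution of the scheme (S) satisfying 0 ≤ P_i^k ≤ P^max and 0 ≤ N_i^k ≤ N^max for all i, k, one has, for u = P and u = N, Σ_{k=0}^{K−1} Δt ‖u_h^{k+1}‖_{1,T}² ≤ C, where u_h^{k+1} is the piecewise constant function associated with (u_i^{k+1})_{0 ≤ i ≤ I+1} and ‖w_h‖_{1,T}² = Σ_{i=0}^{I} (w_{i+1} − w_i)²/h_{i+1/2} + w_0² + w_{I+1}². -/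

import Mathlib

open MeasureTheory Real Filter Topology

noncomputable section

namespace Corrosion

/-- The Bernoulli function `B(x) = x / (e^x - 1)`, `B(0) = 1`. -/
def Bern (x : ℝ) : ℝ := if x = 0 then 1 else x / (Real.exp x - 1)

/-- The two species: cations `P` and electrons `N`. -/
inductive Sp | P | N

/-- charge numbers: `z_P = 3`, `z_N = -1`. -/
def z : Sp → ℝ
  | Sp.P => 3
  | Sp.N => -1

/-- A mesh of `[0,1]`: edge points `xe 0 = x_{1/2} = 0 < xe 1 = x_{3/2} < … < xe I = x_{I+1/2} = 1`. -/
structure Mesh where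
  I : ℕ
  hI : 1 ≤ I
  xe : ℕ → ℝ
  xe0 : xe 0 = 0
  xeI : xe I = 1
  mono : ∀ j, j < I → xe j < xe (j + 1)

namespace Mesh

variable (m : Mesh)

/-- cell centers `x_i` for `1 ≤ i ≤ I` , with `x_0 = 0` and `x_{I+1} = 1`. -/
def xc (i : ℕ) : ℝ :=
  if i = 0 then 0 else if i = m.I + 1 then 1 else (m.xe (i - 1) + m.xe i) / 2

/-- `h_i = x_{i+1/2} - x_{i-1/2}` for `1 ≤ i ≤ I`. -/
def h (i : ℕ) : ℝ := m.xe i - m.xe (i - 1)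

/-- `h_{i+1/2} = x_{i+1} - x_i` for `0 ≤ i ≤ I`. -/
def hp (i : ℕ) : ℝ := m.xc (i + 1) - m.xc i

/-- mesh size `h = max_{1 ≤ i ≤ I} h_i`. -/
def size : ℝ := (Finset.Icc 1 m.I).sup' ⟨1, Finset.mem_Icc.mpr ⟨le_refl 1, m.hI⟩⟩ m.h

/-- piecewise constant function associated to a vector `(w_i)_{0 ≤ i ≤ I+1}`:
equal to `w i` on `(x_{i-1/2}, x_{i+1/2})`, to `w 0` at `x = 0`, to `w (I+1)` at `x = 1`. -/
def pw (w : ℕ → ℝ) (x : ℝ) : ℝ :=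
  if x = 0 then w 0 else if x = 1 then w (m.I + 1) else w (sInf {i : ℕ | x < m.xe i})

/-- square of the discrete `H¹` norm `‖w_h‖_{1,T}`. -/
def norm1sq (w : ℕ → ℝ) : ℝ :=
  (∑ i ∈ Finset.range (m.I + 1), (w (i + 1) - w i) ^ 2 / m.hp i) + w 0 ^ 2 + w (m.I + 1) ^ 2

/-- square of the discrete `L²` norm `‖w_h‖_0`. -/
def norm0sq (w : ℕ → ℝ) : ℝ := ∑ i ∈ Finset.Icc 1 m.I, m.h i * w i ^ 2

/-- the discrete dual norm `‖w_h‖_{-1,2,T}`. -/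
def normDual (w : ℕ → ℝ) : ℝ :=
  sSup {r : ℝ | ∃ v : ℕ → ℝ, m.norm1sq v ≤ 1 ∧
    r = ∫ x in Set.Ioo (0:ℝ) 1, m.pw w x * m.pw v x}

/-- piecewise constant space derivative: on `(x_i, x_{i+1})` it equals `(w_{i+1} - w_i)/h_{i+1/2}`. -/
def dpw (w : ℕ → ℝ) (x : ℝ) : ℝ :=
  (w (sInf {i : ℕ | x < m.xc (i + 1)} + 1) - w (sInf {i : ℕ | x < m.xc (i + 1)})) /
    m.hp (sInf {i : ℕ | x < m.xc (i + 1)})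

end Mesh

/-- All the data of the corrosion model. -/
structure Data where
  lam : ℝ
  eps : ℝ
  alpha0 : ℝ
  alpha1 : ℝ
  V : ℝ
  rho : ℝ
  dPsi0 : ℝ
  dPsi1 : ℝ
  umax : Sp → ℝ
  m0 : Sp → ℝ
  k0 : Sp → ℝ
  m1 : Sp → ℝ
  k1 : Sp → ℝ
  a0 : Sp → ℝ
  b0 : Sp → ℝ
  a1 : Sp → ℝ
  b1 : Sp → ℝ
  u0 : Sp → ℝ → ℝ
  lam_pos : 0 < lam
  umax_pos : ∀ u, 0 < umax u
  m0_pos : ∀ u, 0 < m0 u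
  k0_pos : ∀ u, 0 < k0 u
  m1_pos : ∀ u, 0 < m1 u
  k1_pos : ∀ u, 0 < k1 u
  a0_mem : ∀ u, a0 u ∈ Set.Icc (0:ℝ) 1
  b0_mem : ∀ u, b0 u ∈ Set.Icc (0:ℝ) 1
  a1_mem : ∀ u, a1 u ∈ Set.Icc (0:ℝ) 1
  b1_mem : ∀ u, b1 u ∈ Set.Icc (0:ℝ) 1
  u0_meas : ∀ u, Measurable (u0 u)

namespace Data
variable (d : Data)

/-- `ε_P = 1`, `ε_N = ε`. -/
def epsu : Sp → ℝ
  | Sp.P => 1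
  | Sp.N => d.eps

def beta0 (u : Sp) (x : ℝ) : ℝ :=
  d.m0 u * Real.exp (-(z u) * d.b0 u * x) + d.k0 u * Real.exp (z u * d.a0 u * x)

def beta1 (u : Sp) (x : ℝ) : ℝ :=
  d.m1 u * Real.exp (-(z u) * d.b1 u * x) + d.k1 u * Real.exp (z u * d.a1 u * x)

def gamma0 (u : Sp) (x : ℝ) : ℝ := d.m0 u * d.umax u * Real.exp (-(z u) * d.b0 u * x)

def gamma1 (u : Sp) (x : ℝ) : ℝ := d.k1 u * d.umax u * Real.exp (z u * d.a1 u * x)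

/-- Hypotheses (H). -/
def HypH : Prop :=
  (3 * d.umax Sp.P - d.umax Sp.N + d.rho = 0) ∧
  (∀ u, ∀ᵐ x ∂(volume.restrict (Set.Ioo (0:ℝ) 1)), 0 ≤ d.u0 u x ∧ d.u0 u x ≤ d.umax u) ∧
  (-(1 / (3 * d.a0 Sp.P)) * (1 + Real.log (d.alpha0 * d.a0 Sp.P * d.k0 Sp.P)) ≤ d.dPsi0 ∧
    d.dPsi0 ≤ (1 / d.a0 Sp.N) * (1 + Real.log (d.alpha0 * d.a0 Sp.N * d.k0 Sp.N))) ∧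
  (-(1 / d.b1 Sp.N) * (1 + Real.log (d.alpha1 * d.b1 Sp.N * d.m1 Sp.N)) ≤ d.dPsi1 ∧
    d.dPsi1 ≤ (1 / (3 * d.b1 Sp.P)) * (1 + Real.log (d.alpha1 * d.b1 Sp.P * d.m1 Sp.P)))

end Data

/-- `dΨ_{i+1/2} = (Ψ_{i+1} - Ψ_i)/h_{i+1/2}`. -/
def dPsiF (m : Mesh) (Psi : ℕ → ℝ) (i : ℕ) : ℝ := (Psi (i + 1) - Psi i) / m.hp i

/-- the Scharfetter-Gummel numerical flux `F_{u,i+1/2}`. -/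
def Flux (m : Mesh) (d : Data) (u : Sp) (Psi w : ℕ → ℝ) (i : ℕ) : ℝ :=
  (Bern (z u * m.hp i * dPsiF m Psi i) * w i -
    Bern (-(z u) * m.hp i * dPsiF m Psi i) * w (i + 1)) / m.hp i

/-- The fully implicit scheme (S), with time step `Δt = T / K`.
`sol u k i` is `u_i^k` (for `u = P, N`) and `Psi k i` is `Ψ_i^k`. -/
def Scheme (m : Mesh) (d : Data) (T : ℝ) (K : ℕ)
    (sol : Sp → ℕ → ℕ → ℝ) (Psi : ℕ → ℕ → ℝ) : Prop :=
  (∀ u i, 1 ≤ i → i ≤ m.I →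
    sol u 0 i = (1 / m.h i) * ∫ x in Set.Ioo (m.xe (i - 1)) (m.xe i), d.u0 u x) ∧
  (∀ k, k < K → ∀ i, 1 ≤ i → i ≤ m.I →
    -(d.lam ^ 2) * (dPsiF m (Psi (k + 1)) i - dPsiF m (Psi (k + 1)) (i - 1)) =
      m.h i * (3 * sol Sp.P (k + 1) i - sol Sp.N (k + 1) i + d.rho)) ∧
  (∀ u k, k < K → ∀ i, 1 ≤ i → i ≤ m.I →
    d.epsu u * m.h i * (sol u (k + 1) i - sol u k i) / (T / K) +
      Flux m d u (Psi (k + 1)) (sol u (k + 1)) i -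
      Flux m d u (Psi (k + 1)) (sol u (k + 1)) (i - 1) = 0) ∧
  (∀ k, k < K → Psi (k + 1) 0 - d.alpha0 * dPsiF m (Psi (k + 1)) 0 = d.dPsi0) ∧
  (∀ k, k < K →
    Psi (k + 1) (m.I + 1) + d.alpha1 * dPsiF m (Psi (k + 1)) m.I = d.V - d.dPsi1) ∧
  (∀ u k, k < K →
    -(Flux m d u (Psi (k + 1)) (sol u (k + 1)) 0) =
      d.beta0 u (Psi (k + 1) 0) * sol u (k + 1) 0 - d.gamma0 u (Psi (k + 1) 0)) ∧
  (∀ u k, k < K →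
    Flux m d u (Psi (k + 1)) (sol u (k + 1)) m.I =
      d.beta1 u (d.V - Psi (k + 1) (m.I + 1)) * sol u (k + 1) (m.I + 1) -
      d.gamma1 u (d.V - Psi (k + 1) (m.I + 1)))

/-- The stability property `0 ≤ u_i^k ≤ u^max` for all `i, k`. -/
def Stable (m : Mesh) (d : Data) (K : ℕ) (sol : Sp → ℕ → ℕ → ℝ) : Prop :=
  ∀ u k, k ≤ K → ∀ i, i ≤ m.I + 1 → 0 ≤ sol u k i ∧ sol u k i ≤ d.umax u

/-- the approximate space-time solution `w_{h,Δt}`, equal to the piecewise constant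
function built on `w^{k+1}` for `t ∈ [t^k, t^{k+1})`, with `Δt = T/K`. -/
def apx (m : Mesh) (T : ℝ) (K : ℕ) (w : ℕ → ℕ → ℝ) (x t : ℝ) : ℝ :=
  m.pw (w (Nat.floor (t / (T / K)) + 1)) x

/-- the discrete space derivative `∂_{x,T} w_{h,Δt}`. -/
def dapx (m : Mesh) (T : ℝ) (K : ℕ) (w : ℕ → ℕ → ℝ) (x t : ℝ) : ℝ :=
  m.dpw (w (Nat.floor (t / (T / K)) + 1)) x


/-- hyperbolic cotangent `coth y = cosh y / sinh y`. -/
def coth (x : ℝ) : ℝ := Real.cosh x / Real.sinh x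

/-- approximate trace at `x = 0`: `t ∈ [t^k, t^{k+1}) ↦ w_0^{k+1}`. -/
def trace0 (T : ℝ) (K : ℕ) (w : ℕ → ℕ → ℝ) (t : ℝ) : ℝ :=
  w (Nat.floor (t / (T / K)) + 1) 0

/-- approximate trace at `x = 1`: `t ∈ [t^k, t^{k+1}) ↦ w_{I+1}^{k+1}`. -/
def trace1 (m : Mesh) (T : ℝ) (K : ℕ) (w : ℕ → ℕ → ℝ) (t : ℝ) : ℝ :=
  w (Nat.floor (t / (T / K)) + 1) (m.I + 1)

/-- the measure on `(0,1) × (0,T)` (space × time). -/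
def stMeasure (T : ℝ) : MeasureTheory.Measure (ℝ × ℝ) :=
  (MeasureTheory.volume.restrict (Set.Ioo (0:ℝ) 1)).prod
    (MeasureTheory.volume.restrict (Set.Ioo (0:ℝ) T))

end Corrosion

/-!
Since the densities stay in `[0, u^max]`, the space charge is bounded, and the discrete Poisson
equation with its Robin boundary conditions bounds the discrete field `dΨ` and the boundary
potentials uniformly in the mesh and the time step. For a bounded field the Scharfetter–Gummel
flux is coercive on every edge: `B(-y) = B(y) + y` splits `h_{i+1/2} F_{i+1/2}` into
`B(y) (u_i - u_{i+1})` with `B(y) ≥ e^{-|y|}` and a drift of size `O(h_{i+1/2})`. Testing the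
conservation law against `u^{k+1}` and summing by parts therefore bounds the discrete `H¹`
seminorm by the boundary fluxes, which the interface laws keep bounded, plus the decrease of
the discrete `L²` norm over the time step; the latter telescopes when summed over `k`.
-/

namespace Corrosion

open Finset

lemma Bern_neg (y : ℝ) : Bern (-y) = Bern y + y := by
  unfold Bern
  rcases eq_or_ne y 0 with rfl | hy
  · simp
  · have hexp : Real.exp y - 1 ≠ 0 := by
      rwa [sub_ne_zero, Ne, Real.exp_eq_one_iff]
    have hexp' : 1 - Real.exp y ≠ 0 := fun h => hexp (by linarith)
    rw [if_neg (neg_ne_zero.mpr hy), if_neg hy, Real.exp_neg]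
    field_simp
    ring

lemma exp_neg_le_Bern {y : ℝ} (hy : 0 ≤ y) : Real.exp (-y) ≤ Bern y := by
  rcases hy.eq_or_lt with rfl | hy
  · simp [Bern]
  have hden : 0 < Real.exp y - 1 := by linarith [Real.add_one_le_exp y]
  rw [Bern, if_neg hy.ne', le_div_iff₀ hden, mul_sub, ← Real.exp_add, neg_add_cancel,
    Real.exp_zero, mul_one]
  linarith [Real.add_one_le_exp (-y)]

lemma exp_neg_abs_le_Bern (y : ℝ) : Real.exp (-|y|) ≤ Bern y := by
  rcases le_total 0 y with hy | hy
  · rw [abs_of_nonneg hy]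
    exact exp_neg_le_Bern hy
  · have hflip : Bern y = Bern (-y) + -y := by simpa using Bern_neg (-y)
    rw [abs_of_nonpos hy, hflip]
    linarith [exp_neg_le_Bern (neg_nonneg.mpr hy)]

lemma abs_z_le (u : Sp) : |z u| ≤ 3 := by
  cases u <;> norm_num [z]

lemma exp_z_mul_le (u : Sp) {c : ℝ} (hc : c ∈ Set.Icc (0 : ℝ) 1) (x : ℝ) :
    Real.exp (z u * c * x) ≤ Real.exp (3 * |x|) := by
  refine Real.exp_le_exp.mpr ((le_abs_self _).trans ?_)
  rw [abs_mul, abs_mul, abs_of_nonneg hc.1]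
  calc |z u| * c * |x| ≤ 3 * 1 * |x| :=
        mul_le_mul_of_nonneg_right (mul_le_mul (abs_z_le u) hc.2 hc.1 zero_le_three)
          (abs_nonneg x)
    _ = 3 * |x| := by ring

namespace Mesh

variable (m : Mesh)

lemma xe_lt_xe {j j' : ℕ} (hjj' : j < j') (hj' : j' ≤ m.I) : m.xe j < m.xe j' :=
  strictMonoOn_Iic_of_lt_succ (ψ := m.xe) (n := m.I) (fun j hj => m.mono j hj)
    (hjj'.le.trans hj' : j ≤ m.I) hj' hjj'

lemma xe_le_one {i : ℕ} (hi : i ≤ m.I) : m.xe i ≤ 1 := by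
  rcases hi.lt_or_eq with hi | rfl
  · exact m.xeI ▸ (m.xe_lt_xe hi le_rfl).le
  · exact m.xeI.le

lemma h_pos {i : ℕ} (h1 : 1 ≤ i) (h2 : i ≤ m.I) : 0 < m.h i :=
  sub_pos.mpr (m.xe_lt_xe (by omega) h2)

lemma xc_zero : m.xc 0 = 0 := if_pos rfl

lemma xc_last : m.xc (m.I + 1) = 1 := by
  rw [xc, if_neg (by omega), if_pos rfl]

lemma xc_of_le {i : ℕ} (h1 : 1 ≤ i) (h2 : i ≤ m.I) :
    m.xc i = (m.xe (i - 1) + m.xe i) / 2 := by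
  rw [xc, if_neg (by omega), if_neg (by omega)]

lemma hp_pos {i : ℕ} (hi : i ≤ m.I) : 0 < m.hp i := by
  rw [hp]
  rcases Nat.eq_zero_or_pos i with rfl | h1
  · rw [xc_zero, m.xc_of_le le_rfl m.hI, m.xe0]
    linarith [m.xe0 ▸ m.mono 0 m.hI]
  rcases hi.lt_or_eq with hlt | rfl
  · rw [m.xc_of_le (by omega) (hlt : i + 1 ≤ m.I), m.xc_of_le h1 hi, Nat.succ_sub_one]
    linarith [m.xe_lt_xe (show i - 1 < i + 1 by omega) hlt]
  · rw [xc_last, m.xc_of_le h1 le_rfl, m.xeI]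
    linarith [m.xeI ▸ m.xe_lt_xe (show m.I - 1 < m.I by omega) le_rfl]

lemma sum_hp : ∑ i ∈ range (m.I + 1), m.hp i = 1 := by
  simp only [hp]
  rw [sum_range_sub, xc_last, xc_zero, sub_zero]

lemma hp_le_one {i : ℕ} (hi : i ≤ m.I) : m.hp i ≤ 1 :=
  m.sum_hp ▸ single_le_sum (fun _ hj => (m.hp_pos (Nat.lt_succ_iff.mp (mem_range.mp hj))).le)
    (mem_range.mpr (Nat.lt_succ_of_le hi))

lemma abs_sum_hp_mul_le {f : ℕ → ℝ} {A : ℝ} (hf : ∀ i ≤ m.I, |f i| ≤ A) :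
    |∑ i ∈ range (m.I + 1), m.hp i * f i| ≤ A := by
  calc |∑ i ∈ range (m.I + 1), m.hp i * f i|
      ≤ ∑ i ∈ range (m.I + 1), m.hp i * A := by
        refine (abs_sum_le_sum_abs _ _).trans (sum_le_sum fun i hi => ?_)
        have hi := Nat.lt_succ_iff.mp (mem_range.mp hi)
        rw [abs_mul, abs_of_pos (m.hp_pos hi)]
        exact mul_le_mul_of_nonneg_left (hf i hi) (m.hp_pos hi).le
    _ = A := by rw [← sum_mul, m.sum_hp, one_mul]

lemma sum_h : ∑ i ∈ Icc 1 m.I, m.h i = 1 := by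
  rw [← Ico_add_one_right_eq_Icc, sum_Ico_eq_sum_range, Nat.add_sub_cancel]
  simp only [h, add_comm 1, Nat.add_sub_cancel]
  rw [sum_range_sub, m.xeI, m.xe0, sub_zero]

lemma norm0sq_nonneg (w : ℕ → ℝ) : 0 ≤ m.norm0sq w :=
  sum_nonneg fun i hi => by
    obtain ⟨h1, h2⟩ := mem_Icc.mp hi
    exact mul_nonneg (m.h_pos h1 h2).le (sq_nonneg _)

lemma norm0sq_le {w : ℕ → ℝ} {U : ℝ} (hw : ∀ i ≤ m.I + 1, 0 ≤ w i ∧ w i ≤ U) :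
    m.norm0sq w ≤ U ^ 2 := by
  calc m.norm0sq w ≤ ∑ i ∈ Icc 1 m.I, m.h i * U ^ 2 := by
        refine sum_le_sum fun i hi => ?_
        obtain ⟨h1, h2⟩ := mem_Icc.mp hi
        have := hw i (by omega)
        exact mul_le_mul_of_nonneg_left (pow_le_pow_left₀ this.1 this.2 2) (m.h_pos h1 h2).le
    _ = U ^ 2 := by rw [← sum_mul, m.sum_h, one_mul]

lemma abs_sub_zero_le {x : ℕ → ℝ} {A : ℝ} (hA : 0 ≤ A)
    (hx : ∀ i, 1 ≤ i → i ≤ m.I → |x i - x (i - 1)| ≤ m.h i * A) {i : ℕ} (hi : i ≤ m.I) :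
    |x i - x 0| ≤ A := by
  suffices key : |x i - x 0| ≤ m.xe i * A from
    key.trans (mul_le_of_le_one_left hA (m.xe_le_one hi))
  induction i with
  | zero => simp [m.xe0]
  | succ i ih =>
    have step := hx (i + 1) (by omega) hi
    rw [Nat.add_sub_cancel] at step
    calc |x (i + 1) - x 0| ≤ |x (i + 1) - x i| + |x i - x 0| := abs_sub_le _ _ _
      _ ≤ m.h (i + 1) * A + m.xe i * A := add_le_add step (ih (by omega))
      _ = m.xe (i + 1) * A := by rw [h, Nat.add_sub_cancel]; ring

lemma sum_hp_mul_dPsiF (Pk : ℕ → ℝ) :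
    ∑ i ∈ range (m.I + 1), m.hp i * dPsiF m Pk i = Pk (m.I + 1) - Pk 0 := by
  rw [← sum_range_sub]
  refine sum_congr rfl fun i hi => ?_
  have := (m.hp_pos (Nat.lt_succ_iff.mp (mem_range.mp hi))).ne'
  rw [dPsiF]
  field_simp

lemma abs_dPsiF_le {Pk : ℕ → ℝ} {A α₀ α₁ Φ₀ Φ₁ : ℝ} (hA : 0 ≤ A) (hα₀ : 0 ≤ α₀)
    (hα₁ : 0 ≤ α₁)
    (hinc : ∀ i, 1 ≤ i → i ≤ m.I → |dPsiF m Pk i - dPsiF m Pk (i - 1)| ≤ m.h i * A)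
    (hbc₀ : Pk 0 - α₀ * dPsiF m Pk 0 = Φ₀) (hbc₁ : Pk (m.I + 1) + α₁ * dPsiF m Pk m.I = Φ₁)
    {i : ℕ} (hi : i ≤ m.I) : |dPsiF m Pk i| ≤ |Φ₁ - Φ₀| + 2 * A := by
  set ψ := dPsiF m Pk
  have hdev : ∀ j ≤ m.I, |ψ j - ψ 0| ≤ A := fun j hj => m.abs_sub_zero_le hA hinc hj
  -- `α₀ ψ₀ + α₁ ψ_I + ∑ h_{j+1/2} ψ_j = Φ₁ - Φ₀`, with each `ψ_j` written as `ψ₀ + (ψ_j - ψ₀)`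
  have hkey : (1 + α₀ + α₁) * ψ 0 = (Φ₁ - Φ₀) - α₁ * (ψ m.I - ψ 0) -
      ∑ j ∈ range (m.I + 1), m.hp j * (ψ j - ψ 0) := by
    have := m.sum_hp_mul_dPsiF Pk
    simp only [mul_sub, sum_sub_distrib, ← sum_mul, m.sum_hp]
    linarith
  have hscaled : |(1 + α₀ + α₁) * ψ 0| ≤ |Φ₁ - Φ₀| + α₁ * A + A := by
    have hI : |α₁ * (ψ m.I - ψ 0)| ≤ α₁ * A := by
      rw [abs_mul, abs_of_nonneg hα₁]
      exact mul_le_mul_of_nonneg_left (hdev _ le_rfl) hα₁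
    rw [hkey]
    linarith [abs_sub (Φ₁ - Φ₀ - α₁ * (ψ m.I - ψ 0))
        (∑ j ∈ range (m.I + 1), m.hp j * (ψ j - ψ 0)),
      abs_sub (Φ₁ - Φ₀) (α₁ * (ψ m.I - ψ 0)), m.abs_sum_hp_mul_le hdev]
  have hψ₀ : |ψ 0| ≤ |Φ₁ - Φ₀| + A := by
    rw [abs_mul, abs_of_pos (by linarith)] at hscaled
    refine le_of_mul_le_mul_left (hscaled.trans ?_) (by linarith : 0 < 1 + α₀ + α₁)
    nlinarith [abs_nonneg (Φ₁ - Φ₀)]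
  linarith [abs_sub_abs_le_abs_sub (ψ i) (ψ 0), hdev i hi]

end Mesh

lemma half_mul_sq_sub_le {c B y v δ a U : ℝ} (hc : 0 < c) (hB : c ≤ B) (hy : |y| ≤ a)
    (hv : 0 ≤ v) (hvU : v ≤ U) :
    c / 2 * δ ^ 2 - (a * U) ^ 2 / (2 * c) ≤ (B * δ - y * v) * δ := by
  have hdrift : y * v * δ ≤ a * U * |δ| :=
    calc y * v * δ ≤ |y * v * δ| := le_abs_self _
      _ = |y| * v * |δ| := by rw [abs_mul, abs_mul, abs_of_nonneg hv]
      _ ≤ a * U * |δ| := by gcongr; exact (abs_nonneg y).trans hy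
  have hyoung : a * U * |δ| ≤ c / 2 * δ ^ 2 + (a * U) ^ 2 / (2 * c) := by
    have hsq : 0 ≤ (c * |δ| - a * U) ^ 2 / (2 * c) := by positivity
    have hexpand : (c * |δ| - a * U) ^ 2 / (2 * c) =
        c / 2 * |δ| ^ 2 - a * U * |δ| + (a * U) ^ 2 / (2 * c) := by
      field_simp
      ring
    rw [← sq_abs δ]
    linarith
  nlinarith [mul_le_mul_of_nonneg_right hB (sq_nonneg δ)]

lemma Flux_mul_hp (m : Mesh) (d : Data) (u : Sp) (Pk w : ℕ → ℝ) {i : ℕ} (hi : i ≤ m.I) :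
    Flux m d u Pk w i * m.hp i =
      Bern (z u * m.hp i * dPsiF m Pk i) * (w i - w (i + 1)) -
        z u * m.hp i * dPsiF m Pk i * w (i + 1) := by
  rw [Flux, div_mul_cancel₀ _ (m.hp_pos hi).ne',
    show -z u * m.hp i * dPsiF m Pk i = -(z u * m.hp i * dPsiF m Pk i) by ring, Bern_neg]
  ring

lemma sq_sub_div_hp_le_Flux_mul_sub (m : Mesh) (d : Data) (u : Sp) (Pk w : ℕ → ℝ) {M U : ℝ}
    (hM : 0 ≤ M) {i : ℕ} (hi : i ≤ m.I) (hψ : |dPsiF m Pk i| ≤ M) (hw : 0 ≤ w (i + 1))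
    (hwU : w (i + 1) ≤ U) :
    Real.exp (-(3 * M)) / 2 * (w (i + 1) - w i) ^ 2 / m.hp i ≤
      Flux m d u Pk w i * (w i - w (i + 1)) +
        (3 * M * U) ^ 2 / (2 * Real.exp (-(3 * M))) * m.hp i := by
  have hp := m.hp_pos hi
  have hy : |z u * m.hp i * dPsiF m Pk i| ≤ 3 * M * m.hp i := by
    rw [abs_mul, abs_mul, abs_of_pos hp]
    calc |z u| * m.hp i * |dPsiF m Pk i| ≤ 3 * m.hp i * M :=
          mul_le_mul (mul_le_mul_of_nonneg_right (abs_z_le u) hp.le) hψ (abs_nonneg _)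
            (by positivity)
      _ = 3 * M * m.hp i := by ring
  have hB : Real.exp (-(3 * M)) ≤ Bern (z u * m.hp i * dPsiF m Pk i) := by
    refine le_trans (Real.exp_le_exp.mpr (neg_le_neg ?_)) (exp_neg_abs_le_Bern _)
    exact hy.trans (mul_le_of_le_one_right (by positivity) (m.hp_le_one hi))
  have hedge := half_mul_sq_sub_le (δ := w i - w (i + 1)) (Real.exp_pos _) hB hy hw hwU
  rw [← Flux_mul_hp m d u Pk w hi] at hedge
  rw [div_le_iff₀ hp]
  calc Real.exp (-(3 * M)) / 2 * (w (i + 1) - w i) ^ 2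
      = Real.exp (-(3 * M)) / 2 * (w i - w (i + 1)) ^ 2 := by ring
    _ ≤ Flux m d u Pk w i * m.hp i * (w i - w (i + 1)) +
        (3 * M * m.hp i * U) ^ 2 / (2 * Real.exp (-(3 * M))) := by linarith
    _ = _ := by ring

lemma sum_range_mul_sub_succ (F w : ℕ → ℝ) (n : ℕ) :
    ∑ i ∈ range (n + 1), F i * (w i - w (i + 1)) =
      F 0 * w 0 - F n * w (n + 1) + ∑ i ∈ Icc 1 n, (F i - F (i - 1)) * w i := by
  induction n with
  | zero => simp [mul_sub]
  | succ n ih =>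
    rw [sum_range_succ, ih, sum_Icc_succ_top (by omega), Nat.add_sub_cancel]
    ring

lemma sum_Icc_sub_mul_le (m : Mesh) {F w wold : ℕ → ℝ} {eps Δt : ℝ} (heps : 0 ≤ eps)
    (hΔt : 0 < Δt)
    (hint : ∀ i, 1 ≤ i → i ≤ m.I → eps * m.h i * (w i - wold i) / Δt + F i - F (i - 1) = 0) :
    ∑ i ∈ Icc 1 m.I, (F i - F (i - 1)) * w i ≤
      eps / (2 * Δt) * (m.norm0sq wold - m.norm0sq w) := by
  rw [Mesh.norm0sq, Mesh.norm0sq, ← sum_sub_distrib, mul_sum]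
  refine sum_le_sum fun i hi => ?_
  obtain ⟨h1, h2⟩ := mem_Icc.mp hi
  have hc : 0 ≤ eps * m.h i / Δt := by have := m.h_pos h1 h2; positivity
  -- the implicit Euler step dissipates the discrete `L²` norm
  have hdiss : (w i ^ 2 - wold i ^ 2) / 2 ≤ (w i - wold i) * w i := by
    nlinarith [sq_nonneg (w i - wold i)]
  calc (F i - F (i - 1)) * w i = -(eps * m.h i / Δt) * ((w i - wold i) * w i) := by
        rw [show F i - F (i - 1) = -(eps * m.h i * (w i - wold i) / Δt) by
          linarith [hint i h1 h2]]
        ring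
    _ ≤ -(eps * m.h i / Δt) * ((w i ^ 2 - wold i ^ 2) / 2) := by nlinarith
    _ = eps / (2 * Δt) * (m.h i * wold i ^ 2 - m.h i * w i ^ 2) := by ring

lemma norm1sq_step_le (m : Mesh) (d : Data) (u : Sp) {Pk w wold : ℕ → ℝ}
    {M U eps Δt G : ℝ}
    (hM : 0 ≤ M) (heps : 0 ≤ eps) (hΔt : 0 < Δt)
    (hψ : ∀ i ≤ m.I, |dPsiF m Pk i| ≤ M) (hw : ∀ i ≤ m.I + 1, 0 ≤ w i ∧ w i ≤ U)
    (hint : ∀ i, 1 ≤ i → i ≤ m.I →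
      eps * m.h i * (w i - wold i) / Δt + Flux m d u Pk w i - Flux m d u Pk w (i - 1) = 0)
    (hbdry : Flux m d u Pk w 0 * w 0 - Flux m d u Pk w m.I * w (m.I + 1) ≤ G) :
    Δt * m.norm1sq w ≤
      Δt * (2 / Real.exp (-(3 * M)) * (G + (3 * M * U) ^ 2 / (2 * Real.exp (-(3 * M)))) +
          2 * U ^ 2) +
        eps / Real.exp (-(3 * M)) * (m.norm0sq wold - m.norm0sq w) := by
  set c := Real.exp (-(3 * M))
  have hc : 0 < c := Real.exp_pos _
  set C₁ := (3 * M * U) ^ 2 / (2 * c)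
  set S := ∑ i ∈ range (m.I + 1), (w (i + 1) - w i) ^ 2 / m.hp i
  have hedges : c / 2 * S ≤
      ∑ i ∈ range (m.I + 1), Flux m d u Pk w i * (w i - w (i + 1)) + C₁ := by
    calc c / 2 * S = ∑ i ∈ range (m.I + 1), c / 2 * (w (i + 1) - w i) ^ 2 / m.hp i := by
          simp only [S, mul_sum, mul_div_assoc]
      _ ≤ ∑ i ∈ range (m.I + 1), (Flux m d u Pk w i * (w i - w (i + 1)) + C₁ * m.hp i) := by
          refine sum_le_sum fun i hi => ?_
          have hi := Nat.lt_succ_iff.mp (mem_range.mp hi)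
          have hwi := hw (i + 1) (by omega)
          exact sq_sub_div_hp_le_Flux_mul_sub m d u Pk w hM hi (hψ i hi) hwi.1 hwi.2
      _ = _ := by rw [sum_add_distrib, ← mul_sum, m.sum_hp, mul_one]
  rw [sum_range_mul_sub_succ] at hedges
  have hS : c / 2 * S ≤ G + eps / (2 * Δt) * (m.norm0sq wold - m.norm0sq w) + C₁ := by
    linarith [sum_Icc_sub_mul_le m heps hΔt hint]
  have hS' :
      Δt * S ≤ Δt * (2 / c * (G + C₁)) + eps / c * (m.norm0sq wold - m.norm0sq w) := by
    calc Δt * S = 2 * Δt / c * (c / 2 * S) := by field_simp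
      _ ≤ 2 * Δt / c * (G + eps / (2 * Δt) * (m.norm0sq wold - m.norm0sq w) + C₁) := by gcongr
      _ = _ := by field_simp; ring
  have hw₀ := hw 0 (by omega)
  have hwI := hw (m.I + 1) le_rfl
  have htraces : w 0 ^ 2 + w (m.I + 1) ^ 2 ≤ 2 * U ^ 2 := by
    nlinarith [pow_le_pow_left₀ hw₀.1 hw₀.2 2, pow_le_pow_left₀ hwI.1 hwI.2 2]
  calc Δt * m.norm1sq w = Δt * S + Δt * (w 0 ^ 2 + w (m.I + 1) ^ 2) := by
        rw [Mesh.norm1sq]; ring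
    _ ≤ _ := by nlinarith

lemma sub_mul_mul_le {β γ w U : ℝ} (hβ : 0 ≤ β) (hγ : 0 ≤ γ) (hw : 0 ≤ w) (hwU : w ≤ U) :
    (γ - β * w) * w ≤ γ * U := by
  nlinarith [mul_nonneg hβ (mul_nonneg hw hw), mul_le_mul_of_nonneg_left hwU hγ]

namespace Data

variable (d : Data)

def chargeBound : ℝ := 3 * d.umax Sp.P + d.umax Sp.N + |d.rho|

lemma chargeBound_nonneg : 0 ≤ d.chargeBound := by
  have := d.umax_pos Sp.P
  have := d.umax_pos Sp.N
  rw [chargeBound]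
  positivity

def fieldBound : ℝ := |d.V - d.dPsi1 - d.dPsi0| + 2 * (d.chargeBound / d.lam ^ 2)

lemma fieldBound_nonneg : 0 ≤ d.fieldBound :=
  add_nonneg (abs_nonneg _)
    (mul_nonneg zero_le_two (div_nonneg d.chargeBound_nonneg (sq_nonneg _)))

lemma beta0_nonneg (u : Sp) (x : ℝ) : 0 ≤ d.beta0 u x :=
  add_nonneg (mul_nonneg (d.m0_pos u).le (Real.exp_nonneg _))
    (mul_nonneg (d.k0_pos u).le (Real.exp_nonneg _))

lemma beta1_nonneg (u : Sp) (x : ℝ) : 0 ≤ d.beta1 u x :=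
  add_nonneg (mul_nonneg (d.m1_pos u).le (Real.exp_nonneg _))
    (mul_nonneg (d.k1_pos u).le (Real.exp_nonneg _))

lemma gamma0_nonneg (u : Sp) (x : ℝ) : 0 ≤ d.gamma0 u x :=
  mul_nonneg (mul_nonneg (d.m0_pos u).le (d.umax_pos u).le) (Real.exp_nonneg _)

lemma gamma1_nonneg (u : Sp) (x : ℝ) : 0 ≤ d.gamma1 u x :=
  mul_nonneg (mul_nonneg (d.k1_pos u).le (d.umax_pos u).le) (Real.exp_nonneg _)

lemma gamma0_le (u : Sp) (x : ℝ) :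
    d.gamma0 u x ≤ d.m0 u * d.umax u * Real.exp (3 * |x|) := by
  rw [gamma0, show -z u * d.b0 u * x = z u * d.b0 u * (-x) by ring, ← abs_neg x]
  exact mul_le_mul_of_nonneg_left (exp_z_mul_le u (d.b0_mem u) (-x))
    (mul_nonneg (d.m0_pos u).le (d.umax_pos u).le)

lemma gamma1_le (u : Sp) (x : ℝ) :
    d.gamma1 u x ≤ d.k1 u * d.umax u * Real.exp (3 * |x|) :=
  mul_le_mul_of_nonneg_left (exp_z_mul_le u (d.a1_mem u) x)
    (mul_nonneg (d.k1_pos u).le (d.umax_pos u).le)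

def boundaryBound (u : Sp) : ℝ :=
  d.umax u ^ 2 * (d.m0 u * Real.exp (3 * (|d.dPsi0| + d.alpha0 * d.fieldBound)) +
    d.k1 u * Real.exp (3 * (|d.dPsi1| + d.alpha1 * d.fieldBound)))

def densityBound (T : ℝ) (u : Sp) : ℝ :=
  T * (2 / Real.exp (-(3 * d.fieldBound)) * (d.boundaryBound u +
      (3 * d.fieldBound * d.umax u) ^ 2 / (2 * Real.exp (-(3 * d.fieldBound)))) +
    2 * d.umax u ^ 2) + d.epsu u / Real.exp (-(3 * d.fieldBound)) * d.umax u ^ 2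

end Data

section Scheme

variable {m : Mesh} {d : Data} {T : ℝ} {K : ℕ} {sol : Sp → ℕ → ℕ → ℝ} {Psi : ℕ → ℕ → ℝ}

lemma Stable.abs_charge_le (hSt : Stable m d K sol) {k i : ℕ} (hk : k ≤ K)
    (hi : i ≤ m.I + 1) :
    |3 * sol Sp.P k i - sol Sp.N k i + d.rho| ≤ d.chargeBound := by
  obtain ⟨hP₀, hP₁⟩ := hSt Sp.P k hk i hi
  obtain ⟨hN₀, hN₁⟩ := hSt Sp.N k hk i hi
  rw [abs_le, Data.chargeBound]
  constructor <;> linarith [le_abs_self d.rho, neg_abs_le d.rho]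

lemma Scheme.abs_dPsiF_sub_le (hS : Scheme m d T K sol Psi) (hSt : Stable m d K sol) {k : ℕ}
    (hk : k < K) {i : ℕ} (h1 : 1 ≤ i) (h2 : i ≤ m.I) :
    |dPsiF m (Psi (k + 1)) i - dPsiF m (Psi (k + 1)) (i - 1)| ≤
      m.h i * (d.chargeBound / d.lam ^ 2) := by
  have hl : 0 < d.lam ^ 2 := pow_pos d.lam_pos 2
  have hpois := hS.2.1 k hk i h1 h2
  rw [← mul_div_assoc, le_div_iff₀ hl]
  calc |dPsiF m (Psi (k + 1)) i - dPsiF m (Psi (k + 1)) (i - 1)| * d.lam ^ 2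
      = |-d.lam ^ 2 * (dPsiF m (Psi (k + 1)) i - dPsiF m (Psi (k + 1)) (i - 1))| := by
        rw [abs_mul, abs_neg, abs_of_pos hl, mul_comm]
    _ = m.h i * |3 * sol Sp.P (k + 1) i - sol Sp.N (k + 1) i + d.rho| := by
        rw [hpois, abs_mul, abs_of_pos (m.h_pos h1 h2)]
    _ ≤ m.h i * d.chargeBound :=
        mul_le_mul_of_nonneg_left (hSt.abs_charge_le (by omega) (by omega)) (m.h_pos h1 h2).le

lemma Scheme.abs_dPsiF_le (hS : Scheme m d T K sol Psi) (hSt : Stable m d K sol)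
    (ha0 : 0 ≤ d.alpha0) (ha1 : 0 ≤ d.alpha1) {k : ℕ} (hk : k < K) {i : ℕ} (hi : i ≤ m.I) :
    |dPsiF m (Psi (k + 1)) i| ≤ d.fieldBound :=
  m.abs_dPsiF_le (div_nonneg d.chargeBound_nonneg (sq_nonneg _)) ha0 ha1
    (fun _ h1 h2 => hS.abs_dPsiF_sub_le hSt hk h1 h2) (hS.2.2.2.1 k hk) (hS.2.2.2.2.1 k hk) hi

lemma Scheme.abs_Psi_zero_le (hS : Scheme m d T K sol Psi) (hSt : Stable m d K sol)
    (ha0 : 0 ≤ d.alpha0) (ha1 : 0 ≤ d.alpha1) {k : ℕ} (hk : k < K) :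
    |Psi (k + 1) 0| ≤ |d.dPsi0| + d.alpha0 * d.fieldBound := by
  have hbc := hS.2.2.2.1 k hk
  have hψ := hS.abs_dPsiF_le hSt ha0 ha1 hk (Nat.zero_le _)
  rw [show Psi (k + 1) 0 = d.dPsi0 + d.alpha0 * dPsiF m (Psi (k + 1)) 0 by linarith]
  refine (abs_add_le _ _).trans (add_le_add_right ?_ _)
  rw [abs_mul, abs_of_nonneg ha0]
  exact mul_le_mul_of_nonneg_left hψ ha0

lemma Scheme.abs_V_sub_Psi_last_le (hS : Scheme m d T K sol Psi) (hSt : Stable m d K sol)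
    (ha0 : 0 ≤ d.alpha0) (ha1 : 0 ≤ d.alpha1) {k : ℕ} (hk : k < K) :
    |d.V - Psi (k + 1) (m.I + 1)| ≤ |d.dPsi1| + d.alpha1 * d.fieldBound := by
  have hbc := hS.2.2.2.2.1 k hk
  have hψ := hS.abs_dPsiF_le hSt ha0 ha1 hk le_rfl
  rw [show d.V - Psi (k + 1) (m.I + 1) = d.dPsi1 + d.alpha1 * dPsiF m (Psi (k + 1)) m.I by
    linarith]
  refine (abs_add_le _ _).trans (add_le_add_right ?_ _)
  rw [abs_mul, abs_of_nonneg ha1]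
  exact mul_le_mul_of_nonneg_left hψ ha1

lemma Scheme.boundary_flux_le (hS : Scheme m d T K sol Psi) (hSt : Stable m d K sol)
    (ha0 : 0 ≤ d.alpha0) (ha1 : 0 ≤ d.alpha1) (u : Sp) {k : ℕ} (hk : k < K) :
    Flux m d u (Psi (k + 1)) (sol u (k + 1)) 0 * sol u (k + 1) 0 -
      Flux m d u (Psi (k + 1)) (sol u (k + 1)) m.I * sol u (k + 1) (m.I + 1) ≤
        d.boundaryBound u := by
  set x₀ := Psi (k + 1) 0
  set x₁ := d.V - Psi (k + 1) (m.I + 1)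
  have hγ₀ : d.gamma0 u x₀ ≤
      d.m0 u * d.umax u * Real.exp (3 * (|d.dPsi0| + d.alpha0 * d.fieldBound)) := by
    refine (d.gamma0_le u x₀).trans (mul_le_mul_of_nonneg_left ?_ ?_)
    · exact Real.exp_le_exp.mpr (by linarith [hS.abs_Psi_zero_le hSt ha0 ha1 hk])
    · exact mul_nonneg (d.m0_pos u).le (d.umax_pos u).le
  have hγ₁ : d.gamma1 u x₁ ≤
      d.k1 u * d.umax u * Real.exp (3 * (|d.dPsi1| + d.alpha1 * d.fieldBound)) := by
    refine (d.gamma1_le u x₁).trans (mul_le_mul_of_nonneg_left ?_ ?_)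
    · exact Real.exp_le_exp.mpr (by linarith [hS.abs_V_sub_Psi_last_le hSt ha0 ha1 hk])
    · exact mul_nonneg (d.k1_pos u).le (d.umax_pos u).le
  obtain ⟨-, -, -, -, -, hflux₀, hflux₁⟩ := hS
  obtain ⟨hw₀, hw₀U⟩ := hSt u (k + 1) (by omega) 0 (by omega)
  obtain ⟨hw₁, hw₁U⟩ := hSt u (k + 1) (by omega) (m.I + 1) le_rfl
  have hleft : Flux m d u (Psi (k + 1)) (sol u (k + 1)) 0 * sol u (k + 1) 0 ≤
      d.gamma0 u x₀ * d.umax u := by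
    rw [show Flux m d u (Psi (k + 1)) (sol u (k + 1)) 0 =
      d.gamma0 u x₀ - d.beta0 u x₀ * sol u (k + 1) 0 by linarith [hflux₀ u k hk]]
    exact sub_mul_mul_le (d.beta0_nonneg u x₀) (d.gamma0_nonneg u x₀) hw₀ hw₀U
  have hright : -(Flux m d u (Psi (k + 1)) (sol u (k + 1)) m.I * sol u (k + 1) (m.I + 1)) ≤
      d.gamma1 u x₁ * d.umax u := by
    rw [hflux₁ u k hk, ← neg_mul, neg_sub]
    exact sub_mul_mul_le (d.beta1_nonneg u x₁) (d.gamma1_nonneg u x₁) hw₁ hw₁U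
  have hU := (d.umax_pos u).le
  calc _ ≤ d.gamma0 u x₀ * d.umax u + d.gamma1 u x₁ * d.umax u := by linarith
    _ ≤ _ := add_le_add (mul_le_mul_of_nonneg_right hγ₀ hU)
        (mul_le_mul_of_nonneg_right hγ₁ hU)
    _ = d.boundaryBound u := by rw [Data.boundaryBound]; ring

lemma Scheme.sum_norm1sq_le (hS : Scheme m d T K sol Psi) (hSt : Stable m d K sol)
    (heps : 0 ≤ d.eps) (ha0 : 0 ≤ d.alpha0) (ha1 : 0 ≤ d.alpha1) (hT : 0 < T) (hK : 1 ≤ K)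
    (u : Sp) :
    ∑ k ∈ range K, T / K * m.norm1sq (sol u (k + 1)) ≤ d.densityBound T u := by
  set c := Real.exp (-(3 * d.fieldBound))
  set B := 2 / c * (d.boundaryBound u + (3 * d.fieldBound * d.umax u) ^ 2 / (2 * c)) +
    2 * d.umax u ^ 2
  have hK₀ : (0 : ℝ) < K := by exact_mod_cast hK
  have hepsu : 0 ≤ d.epsu u := by cases u <;> simp [Data.epsu, heps]
  have hstep : ∀ k ∈ range K, T / K * m.norm1sq (sol u (k + 1)) ≤
      T / K * B + d.epsu u / c * (m.norm0sq (sol u k) - m.norm0sq (sol u (k + 1))) := by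
    intro k hk
    have hk := mem_range.mp hk
    exact norm1sq_step_le m d u d.fieldBound_nonneg hepsu (div_pos hT hK₀)
      (fun i hi => hS.abs_dPsiF_le hSt ha0 ha1 hk hi) (hSt u (k + 1) hk)
      (hS.2.2.1 u k hk) (hS.boundary_flux_le hSt ha0 ha1 u hk)
  calc ∑ k ∈ range K, T / K * m.norm1sq (sol u (k + 1))
      ≤ ∑ k ∈ range K,
          (T / K * B + d.epsu u / c * (m.norm0sq (sol u k) - m.norm0sq (sol u (k + 1)))) :=
        sum_le_sum hstep
    _ = T * B + d.epsu u / c * (m.norm0sq (sol u 0) - m.norm0sq (sol u K)) := by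
        rw [sum_add_distrib, sum_const, card_range, nsmul_eq_mul, ← mul_sum,
          sum_range_sub' (fun k => m.norm0sq (sol u k))]
        field_simp
    _ ≤ d.densityBound T u := by
        have h₀ := m.norm0sq_le (hSt u 0 (Nat.zero_le K))
        have hNK := m.norm0sq_nonneg (sol u K)
        rw [Data.densityBound]
        gcongr
        linarith

end Scheme

end Corrosion

open Corrosion in
theorem discrete_L2H1_estimate_densities_general
    (d : Data) (heps : 0 ≤ d.eps) (ha0 : 0 < d.alpha0) (ha1 : 0 < d.alpha1)
    (T : ℝ) (hT : 0 < T) :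
    ∃ C : ℝ, 0 < C ∧ ∀ (K : ℕ), 1 ≤ K → ∀ (m : Mesh)
      (sol : Sp → ℕ → ℕ → ℝ) (Psi : ℕ → ℕ → ℝ),
      Scheme m d T K sol Psi → Stable m d K sol →
      ∀ u : Sp, (∑ k ∈ Finset.range K, T / K * m.norm1sq (sol u (k + 1))) ≤ C := by
  refine ⟨max (max (d.densityBound T Sp.P) (d.densityBound T Sp.N)) 1,
    lt_max_of_lt_right one_pos, fun K hK m sol Psi hS hSt u => ?_⟩
  refine (hS.sum_norm1sq_le hSt heps ha0.le ha1.le hT hK u).trans (le_max_of_le_left ?_)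
  cases u
  · exact le_max_left _ _
  · exact le_max_right _ _

open Corrosion in
/-- discrete `L²(0,T;H¹)` estimate on the densities. -/
theorem discrete_L2H1_estimate_densities
    (d : Data) (heps : 0 ≤ d.eps) (ha0 : 0 < d.alpha0) (ha1 : 0 < d.alpha1) (hH : d.HypH)
    (T : ℝ) (hT : 0 < T) :
    ∃ C : ℝ, 0 < C ∧ ∀ (K : ℕ), 1 ≤ K → ∀ (m : Mesh)
      (sol : Sp → ℕ → ℕ → ℝ) (Psi : ℕ → ℕ → ℝ),
      Scheme m d T K sol Psi → Stable m d K sol →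
      ∀ u : Sp, (∑ k ∈ Finset.range K, T / K * m.norm1sq (sol u (k + 1))) ≤ C :=
  discrete_L2H1_estimate_densities_general d heps ha0 ha1 T hT
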